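/- Head spine absorbs call-by-name: for all terms M and N, he(M) = N if and only if there exists a term P with bn(M) = P and he(P) = N; i.e., as big-step relations, he ∘ bn = he. -/

import Mathlib

/-- Pure λ-calculus terms (de Bruijn representation). -/
inductive Tm : Type
  | var : Nat → Tm
  | lam : Tm → Tm
  | app : Tm → Tm → Tm
deriving DecidableEq

/-- Shift the free variables (those ≥ `c`) of a term up by one. -/
def lift (c : Nat) : Tm → Tm
  | .var n => if n < c then .var n else .var (n + 1)
  | .lam b => .lam (lift (c + 1) b)
  | .app m n => .app (lift c m) (lift c n)

/-- Capture-avoiding substitution `[N/k]B` (de Bruijn). -/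
def subst (N : Tm) (k : Nat) : Tm → Tm
  | .var n => if n < k then .var n else if n = k then N else .var (n - 1)
  | .lam b => .lam (subst (lift 0 N) (k + 1) b)
  | .app m n => .app (subst N k m) (subst N k n)
/-- Composition of big-step relations: `(Comp s2 s1) M N` iff
    there is `P` with `s1 M P` and `s2 P N`. -/
def Comp (s2 s1 : Tm → Tm → Prop) : Tm → Tm → Prop :=
  fun M N => ∃ P, s1 M P ∧ s2 P N

/-- The term `Ω = (λx.x x)(λx.x x)`. -/
def Omega : Tm :=
  .app (.lam (.app (.var 0) (.var 0))) (.lam (.app (.var 0) (.var 0)))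
/-- Call-by-name big-step relation. -/
inductive Bn : Tm → Tm → Prop
  | var : ∀ n, Bn (.var n) (.var n)
  | lam : ∀ B, Bn (.lam B) (.lam B)
  | beta : ∀ M N B B', Bn M (.lam B) → Bn (subst N 0 B) B' → Bn (.app M N) B'
  | neu : ∀ M N M', Bn M M' → (∀ B, M' ≠ .lam B) → Bn (.app M N) (.app M' N)
/-- Head spine big-step relation. -/
inductive He : Tm → Tm → Prop
  | var : ∀ n, He (.var n) (.var n)
  | lam : ∀ B B', He B B' → He (.lam B) (.lam B')
  | beta : ∀ M N B B', He M (.lam B) → He (subst N 0 B) B' → He (.app M N) B'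
  | neu : ∀ M N M', He M M' → (∀ B, M' ≠ .lam B) → He (.app M N) (.app M' N)

/-!
Both relations are read through small-step head reduction `→h`, which is deterministic:
`he(M) = N` iff `M →h* N` with `N` head normal, and `bn(M) = P` implies `M →h* P`.
Up to the first abstraction or neutral term on the head reduction path of `M`, every step
is a call-by-name step, so that term is `bn(M)`; the rest of the path computes `he(bn(M))`.

The only non-structural point is that a head-normalising reduction sequence is a `he`
derivation: for a redex `(λx.B) N` one needs a head normal form of `B`. It exists because
head reduction commutes with substitution, so the reduction of `B` embeds into the finite
reduction of `[N/x]B`; this is why that induction runs over the number of steps.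
-/

theorem lift_lift (t : Tm) {c c' : ℕ} (h : c ≤ c') :
    lift c (lift c' t) = lift (c' + 1) (lift c t) := by
  induction t generalizing c c' with
  | var n => simp only [lift]; split_ifs <;> simp only [lift] <;> split_ifs <;> grind
  | lam b ih => simp only [lift, ih (Nat.succ_le_succ h)]
  | app m n ihm ihn => simp only [lift, ihm h, ihn h]

theorem subst_lift (t N : Tm) (k : ℕ) : subst N k (lift k t) = t := by
  induction t generalizing k N with
  | var n => simp only [lift]; split_ifs <;> simp only [subst] <;> split_ifs <;> grind
  | lam b ih => simp only [lift, subst, ih]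
  | app m n ihm ihn => simp only [lift, subst, ihm, ihn]

theorem lift_subst (t N : Tm) {c k : ℕ} (h : c ≤ k) :
    lift c (subst N k t) = subst (lift c N) (k + 1) (lift c t) := by
  induction t generalizing c k N with
  | var n => simp only [lift, subst]; split_ifs <;> simp only [lift, subst] <;> split_ifs <;> grind
  | lam b ih =>
    simp only [lift, subst, ih _ (Nat.succ_le_succ h), lift_lift N (Nat.zero_le c)]
  | app m n ihm ihn => simp only [lift, subst, ihm _ h, ihn _ h]

theorem subst_subst (t N M : Tm) (i k : ℕ) :
    subst N (i + k) (subst M i t) =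
      subst (subst N (i + k) M) i (subst (lift i N) (i + k + 1) t) := by
  induction t generalizing i N M with
  | var n =>
    simp only [subst]
    split_ifs <;> (try simp only [subst]) <;> (try split_ifs) <;>
      first | grind | exact (subst_lift N _ i).symm
  | lam b ih =>
    have := ih (lift 0 N) (lift 0 M) (i + 1)
    rw [Nat.add_right_comm i 1 k] at this
    simp only [subst, this, lift_subst M N (Nat.zero_le (i + k)), lift_lift N (Nat.zero_le i)]
  | app m n ihm ihn => simp only [subst, ihm, ihn]

theorem subst_subst_zero (t N M : Tm) (k : ℕ) :
    subst N k (subst M 0 t) = subst (subst N k M) 0 (subst (lift 0 N) (k + 1) t) := by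
  simpa using subst_subst t N M 0 k

-- The side condition on `app` keeps `β` the only step at a redex, making `→h` deterministic.
inductive HeadStep : Tm → Tm → Prop
  | beta (b n : Tm) : HeadStep (.app (.lam b) n) (subst n 0 b)
  | lam {b b' : Tm} : HeadStep b b' → HeadStep (.lam b) (.lam b')
  | app {m m' : Tm} (n : Tm) : (∀ b, m ≠ .lam b) → HeadStep m m' → HeadStep (.app m n) (.app m' n)

inductive HeadSteps : ℕ → Tm → Tm → Prop
  | refl (a : Tm) : HeadSteps 0 a a
  | head {a b c : Tm} {k : ℕ} : HeadStep a b → HeadSteps k b c → HeadSteps (k + 1) a c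

def HeadNormal (t : Tm) : Prop := ∀ t', ¬ HeadStep t t'

theorem HeadStep.det {a b c : Tm} (hb : HeadStep a b) (hc : HeadStep a c) : b = c := by
  induction hb generalizing c with
  | beta => cases hc with
    | beta => rfl
    | app _ hl _ => exact absurd rfl (hl _)
  | lam _ ih => cases hc with
    | lam hc => rw [ih hc]
  | app _ hl _ ih => cases hc with
    | beta => exact absurd rfl (hl _)
    | app _ _ hc => rw [ih hc]

theorem HeadStep.subst {b b' : Tm} (h : HeadStep b b') (N : Tm) (k : ℕ) :
    HeadStep (subst N k b) (subst N k b') := by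
  induction h generalizing N k with
  | beta b n => rw [subst_subst_zero]; exact .beta _ _
  | lam _ ih => exact .lam (ih _ _)
  | @app m _ n hl hm ih =>
    refine .app _ ?_ (ih _ _)
    cases m with
    | var => cases hm
    | lam b => exact absurd rfl (hl b)
    | app => simp [_root_.subst]

theorem headNormal_var (n : ℕ) : HeadNormal (.var n) := fun _ h => nomatch h

theorem headNormal_lam_iff {b : Tm} : HeadNormal (.lam b) ↔ HeadNormal b := by
  refine ⟨fun h b' hb => h _ (.lam hb), fun h _ hb => ?_⟩
  cases hb with
  | lam hb => exact h _ hb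

theorem headNormal_app_iff {m n : Tm} :
    HeadNormal (.app m n) ↔ (∀ b, m ≠ .lam b) ∧ HeadNormal m := by
  refine ⟨fun h => ?_, fun ⟨hl, hm⟩ _ hs => ?_⟩
  · have hl : ∀ b, m ≠ .lam b := by
      rintro b rfl
      exact h _ (.beta b n)
    exact ⟨hl, fun m' hm => h _ (.app n hl hm)⟩
  · cases hs with
    | beta => exact hl _ rfl
    | app _ _ hs => exact hm _ hs

namespace HeadSteps

theorem trans {i j : ℕ} {a b c : Tm} (hab : HeadSteps i a b) (hbc : HeadSteps j b c) :
    HeadSteps (i + j) a c := by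
  induction hab with
  | refl => rw [Nat.zero_add]; exact hbc
  | head hs _ ih => rw [Nat.add_right_comm]; exact .head hs (ih hbc)

theorem subst {k : ℕ} {b b' : Tm} (h : HeadSteps k b b') (N : Tm) (j : ℕ) :
    HeadSteps k (_root_.subst N j b) (_root_.subst N j b') := by
  induction h with
  | refl => exact .refl _
  | head hs _ ih => exact .head (hs.subst N j) ih

theorem lam {k : ℕ} {b b' : Tm} (h : HeadSteps k b b') : HeadSteps k (.lam b) (.lam b') := by
  induction h with
  | refl => exact .refl _
  | head hs _ ih => exact .head (.lam hs) ih

theorem lam_inv {k : ℕ} {b c : Tm} (h : HeadSteps k (.lam b) c) :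
    ∃ b', c = .lam b' ∧ HeadSteps k b b' := by
  generalize hlb : Tm.lam b = lb at h
  induction h generalizing b with
  | refl => exact ⟨b, hlb.symm, .refl b⟩
  | head hs _ ih =>
    subst hlb
    cases hs with
    | lam hs =>
      obtain ⟨b', rfl, h⟩ := ih rfl
      exact ⟨b', rfl, .head hs h⟩

theorem app_left {k : ℕ} {m m' : Tm} (h : HeadSteps k m m') (hm' : ∀ b, m' ≠ .lam b) (n : Tm) :
    HeadSteps k (.app m n) (.app m' n) := by
  induction h with
  | refl => exact .refl _
  | @head a _ _ _ hs hrest ih =>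
    have ha : ∀ b, a ≠ .lam b := by
      rintro b rfl
      cases hs with
      | lam _ => obtain ⟨_, rfl, _⟩ := hrest.lam_inv; exact hm' _ rfl
    exact .head (.app n ha hs) (ih hm')

theorem app_beta {k j : ℕ} {m B n R : Tm} (hm : HeadSteps k m (.lam B))
    (hB : HeadSteps j (_root_.subst n 0 B) R) : ∃ k', HeadSteps k' (.app m n) R := by
  generalize hlB : Tm.lam B = lB at hm
  induction hm with
  | refl => subst hlB; exact ⟨_, .head (.beta B n) hB⟩
  | @head a c _ _ hs hrest ih =>
    by_cases ha : ∃ b, a = .lam b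
    · obtain ⟨b, rfl⟩ := ha
      subst hlB
      cases hs with
      | lam hs =>
        obtain ⟨B', hB', hrest⟩ := hrest.lam_inv
        cases hB'
        exact ⟨_, .head (.beta b n) (((HeadSteps.head hs hrest).subst n 0).trans hB)⟩
    · push Not at ha
      obtain ⟨k', h⟩ := ih hlB
      exact ⟨k' + 1, .head (.app n ha hs) h⟩

-- By determinism, a reduction to a head normal form passes through every reduct of its source.
theorem rest_of_headNormal {i k : ℕ} {a b N : Tm} (hab : HeadSteps i a b)
    (haN : HeadSteps k a N) (hN : HeadNormal N) : i ≤ k ∧ HeadSteps (k - i) b N := by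
  induction hab generalizing k with
  | refl => exact ⟨k.zero_le, haN⟩
  | head hs _ ih =>
    cases haN with
    | refl => exact absurd hs (hN _)
    | head hs' hrest =>
      rw [← hs.det hs'] at hrest
      obtain ⟨hle, hrest⟩ := ih hrest
      exact ⟨by omega, by rwa [Nat.add_sub_add_right]⟩

theorem exists_headNormal_or (k : ℕ) (a : Tm) :
    (∃ i b, i < k ∧ HeadSteps i a b ∧ HeadNormal b) ∨ ∃ b, HeadSteps k a b := by
  induction k generalizing a with
  | zero => exact .inr ⟨a, .refl a⟩
  | succ k ih =>
    by_cases ha : HeadNormal a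
    · exact .inl ⟨0, a, k.zero_lt_succ, .refl a, ha⟩
    · obtain ⟨a', hs⟩ : ∃ a', HeadStep a a' := by simpa [HeadNormal] using ha
      rcases ih a' with ⟨i, b, hi, h, hb⟩ | ⟨b, h⟩
      · exact .inl ⟨i + 1, b, by omega, .head hs h, hb⟩
      · exact .inr ⟨b, .head hs h⟩

theorem of_subst {k j : ℕ} {N b R : Tm} (h : HeadSteps k (_root_.subst N j b) R)
    (hR : HeadNormal R) : ∃ i b', i ≤ k ∧ HeadSteps i b b' ∧ HeadNormal b' ∧
      HeadSteps (k - i) (_root_.subst N j b') R := by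
  rcases exists_headNormal_or (k + 1) b with ⟨i, b', hi, hb, hb'⟩ | ⟨b', hb⟩
  · exact ⟨i, b', by omega, hb, hb', ((hb.subst N j).rest_of_headNormal h hR).2⟩
  · exact absurd ((hb.subst N j).rest_of_headNormal h hR).1 (by omega)

theorem app_inv {k : ℕ} {m n R : Tm} (h : HeadSteps k (.app m n) R) :
    (∃ r B j, r + 1 + j = k ∧ HeadSteps r m (.lam B) ∧ HeadSteps j (_root_.subst n 0 B) R) ∨
      ∃ m', R = .app m' n ∧ HeadSteps k m m' := by
  generalize hmn : Tm.app m n = mn at h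
  induction h generalizing m with
  | refl => exact .inr ⟨m, hmn.symm, .refl m⟩
  | @head _ _ _ k hs hrest ih =>
    subst hmn
    cases hs with
    | beta B n => exact .inl ⟨0, B, k, by omega, .refl _, hrest⟩
    | app n _ hm =>
      rcases ih rfl with ⟨r, B, j, hk, h1, h2⟩ | ⟨m', rfl, h1⟩
      · exact .inl ⟨r + 1, B, j, by omega, .head hm h1, h2⟩
      · exact .inr ⟨m', rfl, .head hm h1⟩

end HeadSteps

theorem He.headNormal {M N : Tm} (h : He M N) : HeadNormal N := by
  induction h with
  | var n => exact headNormal_var n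
  | lam _ _ _ ih => exact headNormal_lam_iff.2 ih
  | beta _ _ _ _ _ _ _ ih => exact ih
  | neu _ _ _ _ hl ih => exact headNormal_app_iff.2 ⟨hl, ih⟩

theorem He.exists_headSteps {M N : Tm} (h : He M N) : ∃ k, HeadSteps k M N := by
  induction h with
  | var n => exact ⟨0, .refl _⟩
  | lam _ _ _ ih =>
    obtain ⟨k, hk⟩ := ih
    exact ⟨k, hk.lam⟩
  | beta _ N _ _ _ _ ih₁ ih₂ =>
    obtain ⟨_, h₁⟩ := ih₁
    obtain ⟨_, h₂⟩ := ih₂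
    exact h₁.app_beta h₂
  | neu _ N _ _ hl ih =>
    obtain ⟨k, hk⟩ := ih
    exact ⟨k, hk.app_left hl N⟩

theorem he_of_headSteps {k : ℕ} {M N : Tm} (h : HeadSteps k M N) (hN : HeadNormal N) :
    He M N := by
  induction k using Nat.strong_induction_on generalizing M N with
  | _ k ihk =>
    induction M generalizing N with
    | var n =>
      cases h with
      | refl => exact .var n
      | head hs _ => cases hs
    | lam b ih =>
      obtain ⟨b', rfl, hb⟩ := h.lam_inv
      exact .lam _ _ (ih hb (headNormal_lam_iff.1 hN))
    | app m n ihm =>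
      rcases h.app_inv with ⟨r, B, j, rfl, hm, hB⟩ | ⟨m', rfl, hm⟩
      · obtain ⟨i, B', hi, hBB', hB', hrest⟩ := hB.of_subst hN
        have hmB' : He m (.lam B') :=
          ihk (r + i) (by omega) (hm.trans hBB'.lam) (headNormal_lam_iff.2 hB')
        exact .beta _ _ _ _ hmB' (ihk (j - i) (by omega) hrest hN)
      · obtain ⟨hl, hm'⟩ := headNormal_app_iff.1 hN
        exact .neu _ _ _ (ihm hm hm') hl

theorem bn_self_of_headNormal {M : Tm} (h : HeadNormal M) : Bn M M := by
  induction M with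
  | var n => exact .var n
  | lam b => exact .lam b
  | app m n ihm =>
    obtain ⟨hl, hm⟩ := headNormal_app_iff.1 h
    exact .neu _ _ _ (ihm hm) hl

theorem Bn.of_headStep {M M' P : Tm} (hs : HeadStep M M') (hM : ∀ b, M ≠ .lam b)
    (h : Bn M' P) : Bn M P := by
  induction hs generalizing P with
  | beta b n => exact .beta _ _ _ _ (.lam b) h
  | lam _ => exact absurd rfl (hM _)
  | app n hl _ ih =>
    cases h with
    | beta _ _ _ _ h₁ h₂ => exact .beta _ _ _ _ (ih hl h₁) h₂
    | neu _ _ _ h₁ h₂ => exact .neu _ _ _ (ih hl h₁) h₂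

theorem Bn.exists_headSteps {M P : Tm} (h : Bn M P) : ∃ k, HeadSteps k M P := by
  induction h with
  | var n => exact ⟨0, .refl _⟩
  | lam B => exact ⟨0, .refl _⟩
  | beta _ N _ _ _ _ ih₁ ih₂ =>
    obtain ⟨_, h₁⟩ := ih₁
    obtain ⟨_, h₂⟩ := ih₂
    exact h₁.app_beta h₂
  | neu _ N _ _ hl ih =>
    obtain ⟨k, hk⟩ := ih
    exact ⟨k, hk.app_left hl N⟩

theorem exists_bn_of_headSteps {k : ℕ} {M N : Tm} (h : HeadSteps k M N) (hN : HeadNormal N) :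
    ∃ P j, Bn M P ∧ HeadSteps j P N := by
  induction h with
  | refl => exact ⟨_, 0, bn_self_of_headNormal hN, .refl _⟩
  | @head M _ _ k hs hrest ih =>
    by_cases hM : ∃ b, M = .lam b
    · obtain ⟨b, rfl⟩ := hM
      exact ⟨_, k + 1, .lam b, .head hs hrest⟩
    · push Not at hM
      obtain ⟨P, j, hP, hj⟩ := ih hN
      exact ⟨P, j, hP.of_headStep hs hM, hj⟩

/-- Head spine absorbs call-by-name: `he(M) = N` iff there is `P` with
    `bn(M) = P` and `he(P) = N`; i.e. `he ∘ bn = he`. -/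
theorem he_absorbs_bn :
    (∀ M N : Tm, He M N ↔ ∃ P : Tm, Bn M P ∧ He P N) ∧
    Comp He Bn = He := by
  have absorbs : ∀ M N : Tm, He M N ↔ ∃ P : Tm, Bn M P ∧ He P N := by
    intro M N
    constructor
    · intro h
      obtain ⟨k, hk⟩ := h.exists_headSteps
      obtain ⟨P, j, hP, hj⟩ := exists_bn_of_headSteps hk h.headNormal
      exact ⟨P, hP, he_of_headSteps hj h.headNormal⟩
    · rintro ⟨P, hP, h⟩
      obtain ⟨i, hi⟩ := hP.exists_headSteps
      obtain ⟨j, hj⟩ := h.exists_headSteps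
      exact he_of_headSteps (hi.trans hj) h.headNormal
  exact ⟨absorbs, funext₂ fun M N => propext (absorbs M N).symm⟩
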